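/- arXiv:2604.03884 — 2 statements merged into one kernel-verified Lean document; each statement's English description precedes it below -/
import Mathlib

section
/- Alice anticommutator bound: Let S = (ψ, A0, A1, B0, B1) be a CHSH strategy on finite-dimensional complex inner product spaces H_A, H_B, let ε ≥ 0, and suppose the bias satisfies β(S) ≥ 2√2 − ε. Then Re⟨ψ, ((A0A1 + A1A0)² ⊗ I) ψ⟩ ≤ c·ε, where c := 128√2. -/
set_option maxHeartbeats 1000000
set_option synthInstance.maxHeartbeats 400000
set_option synthInstance.maxSize 2048

noncomputable section

open scoped TensorProduct
open Module

/-! ## The canonical inner product space structure on tensor products -/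

section TensorInner

variable (E F : Type*) [NormedAddCommGroup E] [InnerProductSpace ℂ E] [FiniteDimensional ℂ E]
  [NormedAddCommGroup F] [InnerProductSpace ℂ F] [FiniteDimensional ℂ F]

/-- Coordinate representation of `E ⊗[ℂ] F` with respect to the tensor product of
orthonormal bases of `E` and `F`. -/
def tensorRepr : (E ⊗[ℂ] F) ≃ₗ[ℂ]
    EuclideanSpace ℂ (Fin (finrank ℂ E) × Fin (finrank ℂ F)) :=
  (((stdOrthonormalBasis ℂ E).toBasis.tensorProduct
      (stdOrthonormalBasis ℂ F).toBasis).equivFun).trans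
    (WithLp.linearEquiv 2 ℂ ((Fin (finrank ℂ E) × Fin (finrank ℂ F)) → ℂ)).symm

/-- The canonical inner product on the tensor product of two finite-dimensional complex
inner product spaces; it satisfies `⟪a ⊗ b, c ⊗ d⟫ = ⟪a, c⟫ * ⟪b, d⟫`. -/
def tensorCore : InnerProductSpace.Core ℂ (E ⊗[ℂ] F) where
  inner x y := inner ℂ (tensorRepr E F x) (tensorRepr E F y)
  conj_inner_symm x y := inner_conj_symm (𝕜 := ℂ) (tensorRepr E F x) (tensorRepr E F y)
  re_inner_nonneg x := inner_self_nonneg (𝕜 := ℂ) (x := tensorRepr E F x)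
  add_left x y z := by simp [map_add, inner_add_left]
  smul_left x y r := by simp [map_smul, inner_smul_left, mul_comm]
  definite x h := by
    have h0 : tensorRepr E F x = 0 := inner_self_eq_zero.mp h
    simpa using (LinearEquiv.map_eq_zero_iff _).mp h0

noncomputable instance tensorNormedAddCommGroup : NormedAddCommGroup (E ⊗[ℂ] F) :=
  (tensorCore E F).toNormedAddCommGroup

noncomputable instance tensorInnerProductSpace : InnerProductSpace ℂ (E ⊗[ℂ] F) :=
  InnerProductSpace.ofCore (tensorCore E F).toCore

end TensorInner

notation "⟪" x ", " y "⟫" => (inner (𝕜 := ℂ) x y)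

/-! ## Qubits, standard states and gates -/

/-- The qubit space `ℂ²`. -/
abbrev Qubit := EuclideanSpace ℂ (Fin 2)

/-- The standard basis state `|0⟩`. -/
def ket0 : Qubit := EuclideanSpace.single 0 1

/-- The standard basis state `|1⟩`. -/
def ket1 : Qubit := EuclideanSpace.single 1 1

/-- The rank-one operator `|a⟩⟨b|` on an inner product space. -/
def ketbra {H : Type*} [NormedAddCommGroup H] [InnerProductSpace ℂ H] (a b : H) :
    H →ₗ[ℂ] H where
  toFun v := (inner ℂ b v : ℂ) • a
  map_add' u v := by simp [inner_add_right, add_smul]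
  map_smul' c v := by simp [inner_smul_right, smul_smul]

/-- The projector `|0⟩⟨0|`. -/
def proj0 : Qubit →ₗ[ℂ] Qubit := ketbra ket0 ket0

/-- The projector `|1⟩⟨1|`. -/
def proj1 : Qubit →ₗ[ℂ] Qubit := ketbra ket1 ket1

/-- The Pauli operator `σ_z = |0⟩⟨0| - |1⟩⟨1|`. -/
def pauliZ : Qubit →ₗ[ℂ] Qubit := ketbra ket0 ket0 - ketbra ket1 ket1

/-- The Pauli operator `σ_x = |0⟩⟨1| + |1⟩⟨0|`. -/
def pauliX : Qubit →ₗ[ℂ] Qubit := ketbra ket0 ket1 + ketbra ket1 ket0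

/-- The Hadamard gate `H = (Z + X)/√2`. -/
def Hadamard : Qubit →ₗ[ℂ] Qubit := ((Real.sqrt 2 : ℂ))⁻¹ • (pauliZ + pauliX)

/-- The reflected Hadamard gate `H' = (Z - X)/√2`. -/
def HadamardPrime : Qubit →ₗ[ℂ] Qubit := ((Real.sqrt 2 : ℂ))⁻¹ • (pauliZ - pauliX)

/-- The rotation `R = sin(π/8)·X + cos(π/8)·Z`, satisfying `RZR† = H`, `RXR† = H'`. -/
def Rotation : Qubit →ₗ[ℂ] Qubit :=
  (Real.sin (Real.pi / 8) : ℂ) • pauliX + (Real.cos (Real.pi / 8) : ℂ) • pauliZ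

/-! ## Bell states -/

/-- The Bell state `|Φ+⟩ = (|00⟩ + |11⟩)/√2`. -/
def bellPhiPlus : Qubit ⊗[ℂ] Qubit :=
  ((Real.sqrt 2 : ℂ))⁻¹ • (ket0 ⊗ₜ[ℂ] ket0 + ket1 ⊗ₜ[ℂ] ket1)

/-- The Bell state `|Φ−⟩ = (|00⟩ − |11⟩)/√2`. -/
def bellPhiMinus : Qubit ⊗[ℂ] Qubit :=
  ((Real.sqrt 2 : ℂ))⁻¹ • (ket0 ⊗ₜ[ℂ] ket0 - ket1 ⊗ₜ[ℂ] ket1)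

/-- The Bell state `|Ψ+⟩ = (|01⟩ + |10⟩)/√2`. -/
def bellPsiPlus : Qubit ⊗[ℂ] Qubit :=
  ((Real.sqrt 2 : ℂ))⁻¹ • (ket0 ⊗ₜ[ℂ] ket1 + ket1 ⊗ₜ[ℂ] ket0)

/-- The Bell state `|Ψ−⟩ = (|01⟩ − |10⟩)/√2`. -/
def bellPsiMinus : Qubit ⊗[ℂ] Qubit :=
  ((Real.sqrt 2 : ℂ))⁻¹ • (ket0 ⊗ₜ[ℂ] ket1 - ket1 ⊗ₜ[ℂ] ket0)

/-! ## Binary observables and CHSH strategies -/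

/-- A binary observable: a symmetric (self-adjoint) involution. -/
structure IsBinaryObservable {H : Type*} [NormedAddCommGroup H] [InnerProductSpace ℂ H]
    (A : H →ₗ[ℂ] H) : Prop where
  symm : A.IsSymmetric
  sq_one : A ∘ₗ A = LinearMap.id

variable {H_A H_B : Type*}
  [NormedAddCommGroup H_A] [InnerProductSpace ℂ H_A] [FiniteDimensional ℂ H_A]
  [NormedAddCommGroup H_B] [InnerProductSpace ℂ H_B] [FiniteDimensional ℂ H_B]

/-- A CHSH strategy: a shared unit state together with two binary observables per party. -/
structure CHSHStrategy (H_A H_B : Type*)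
    [NormedAddCommGroup H_A] [InnerProductSpace ℂ H_A] [FiniteDimensional ℂ H_A]
    [NormedAddCommGroup H_B] [InnerProductSpace ℂ H_B] [FiniteDimensional ℂ H_B] where
  psi : H_A ⊗[ℂ] H_B
  psi_norm : ‖psi‖ = 1
  A0 : H_A →ₗ[ℂ] H_A
  A1 : H_A →ₗ[ℂ] H_A
  B0 : H_B →ₗ[ℂ] H_B
  B1 : H_B →ₗ[ℂ] H_B
  A0_bin : IsBinaryObservable A0
  A1_bin : IsBinaryObservable A1
  B0_bin : IsBinaryObservable B0
  B1_bin : IsBinaryObservable B1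

/-- The general CHSH operator `A0⊗B0 + A0⊗B1 + A1⊗B0 − A1⊗B1`. -/
def CHSH_op (A0 A1 : H_A →ₗ[ℂ] H_A) (B0 B1 : H_B →ₗ[ℂ] H_B) :
    H_A ⊗[ℂ] H_B →ₗ[ℂ] H_A ⊗[ℂ] H_B :=
  TensorProduct.map A0 B0 + TensorProduct.map A0 B1 +
    TensorProduct.map A1 B0 - TensorProduct.map A1 B1

/-- The CHSH bias `β(S) = Re⟨ψ, CHSH ψ⟩` of a strategy. -/
def chshBias (S : CHSHStrategy H_A H_B) : ℝ :=
  (⟪S.psi, (CHSH_op S.A0 S.A1 S.B0 S.B1) S.psi⟫).re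

/-- Alice's observable acting on the shared state. -/
def applyAlice (A : H_A →ₗ[ℂ] H_A) : H_A ⊗[ℂ] H_B →ₗ[ℂ] H_A ⊗[ℂ] H_B :=
  TensorProduct.map A LinearMap.id

/-- Bob's observable acting on the shared state. -/
def applyBob (B : H_B →ₗ[ℂ] H_B) : H_A ⊗[ℂ] H_B →ₗ[ℂ] H_A ⊗[ℂ] H_B :=
  TensorProduct.map LinearMap.id B

/-! ## The extraction circuit -/

variable {H : Type*} [NormedAddCommGroup H] [InnerProductSpace ℂ H] [FiniteDimensional ℂ H]

/-- Ancilla embedding `v ↦ |aux⟩ ⊗ v`. -/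
def embed (aux : Qubit) : H →ₗ[ℂ] (Qubit ⊗[ℂ] H) :=
  (TensorProduct.mk ℂ Qubit H) aux

/-- Controlled gate `|0⟩⟨0| ⊗ I + |1⟩⟨1| ⊗ A`. -/
def controlGate (A : H →ₗ[ℂ] H) : (Qubit ⊗[ℂ] H) →ₗ[ℂ] (Qubit ⊗[ℂ] H) :=
  TensorProduct.map proj0 (LinearMap.id : H →ₗ[ℂ] H) + TensorProduct.map proj1 A

/-- The extraction unitary `U_A = C_{A1}(H ⊗ I)C_{A0}(H ⊗ I)`. -/
def unitaryUA (A0 A1 : H →ₗ[ℂ] H) : (Qubit ⊗[ℂ] H) →ₗ[ℂ] (Qubit ⊗[ℂ] H) :=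
  (controlGate A1) ∘ₗ (TensorProduct.map Hadamard LinearMap.id) ∘ₗ
    (controlGate A0) ∘ₗ (TensorProduct.map Hadamard LinearMap.id)

/-- Alice's extractor `V_A = U_A (|0⟩ ⊗ ·)`. -/
def VA (A0 A1 : H →ₗ[ℂ] H) : H →ₗ[ℂ] (Qubit ⊗[ℂ] H) :=
  (unitaryUA A0 A1) ∘ₗ (embed ket0)

/-- Bob's rotated extraction unitary `U_B = (R ⊗ I) U_A(B0,B1) (R† ⊗ I)`. -/
def unitaryUB (B0 B1 : H →ₗ[ℂ] H) : (Qubit ⊗[ℂ] H) →ₗ[ℂ] (Qubit ⊗[ℂ] H) :=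
  (TensorProduct.map Rotation LinearMap.id) ∘ₗ (unitaryUA B0 B1) ∘ₗ
    (TensorProduct.map (LinearMap.adjoint Rotation) LinearMap.id)

/-- Bob's rotated ancilla `|aux⟩ = R|0⟩`. -/
def auxState : Qubit := Rotation ket0

/-- Bob's extractor `V_B = U_B (|aux⟩ ⊗ ·)`. -/
def VB (B0 B1 : H →ₗ[ℂ] H) : H →ₗ[ℂ] (Qubit ⊗[ℂ] H) :=
  (unitaryUB B0 B1) ∘ₗ (embed auxState)

/-! ## Tensor regrouping -/

/-- The canonical regrouping isomorphism
`(ℂ² ⊗ H_A) ⊗ (ℂ² ⊗ H_B) ≃ (ℂ² ⊗ ℂ²) ⊗ (H_A ⊗ H_B)`. -/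
def regSwap (H_A H_B : Type*)
    [NormedAddCommGroup H_A] [InnerProductSpace ℂ H_A] [FiniteDimensional ℂ H_A]
    [NormedAddCommGroup H_B] [InnerProductSpace ℂ H_B] [FiniteDimensional ℂ H_B] :
    ((Qubit ⊗[ℂ] H_A) ⊗[ℂ] (Qubit ⊗[ℂ] H_B)) ≃ₗ[ℂ]
      ((Qubit ⊗[ℂ] Qubit) ⊗[ℂ] (H_A ⊗[ℂ] H_B)) :=
  (TensorProduct.assoc ℂ Qubit H_A (Qubit ⊗[ℂ] H_B)).trans <|
    (TensorProduct.congr (LinearEquiv.refl ℂ Qubit)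
      (((TensorProduct.assoc ℂ H_A Qubit H_B).symm.trans
        (TensorProduct.congr (TensorProduct.comm ℂ H_A Qubit) (LinearEquiv.refl ℂ H_B))).trans
          (TensorProduct.assoc ℂ Qubit H_A H_B))).trans
      (TensorProduct.assoc ℂ Qubit Qubit (H_A ⊗[ℂ] H_B)).symm

/-! ## The canonical two-qubit CHSH operator and the constants -/

/-- The canonical two-qubit CHSH operator `K = Z⊗H + Z⊗H' + X⊗H − X⊗H'`. -/
def K : (Qubit ⊗[ℂ] Qubit) →ₗ[ℂ] (Qubit ⊗[ℂ] Qubit) :=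
  TensorProduct.map pauliZ Hadamard + TensorProduct.map pauliZ HadamardPrime +
    TensorProduct.map pauliX Hadamard - TensorProduct.map pauliX HadamardPrime

/-- The constant `c = 128√2` in the anticommutator bounds. -/
def cConst : ℝ := 128 * Real.sqrt 2

/-- The error function `δ(ε) = ε + 4√(cε)`. -/
def delta (ε : ℝ) : ℝ := ε + 4 * Real.sqrt (cConst * ε)

end

open scoped TensorProduct
open Module

/-!
Write `X_i = A_i ⊗ I` and `Y_j = I ⊗ B_j`: binary observables with every `X_i` commuting with
every `Y_j`. For such operators the CHSH operator `C` satisfies `C² = 4 - [X₀, X₁][Y₀, Y₁]`, and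
commutators of binary observables are skew-adjoint of norm at most `2`, so
`‖Cψ‖² = 4 + Re⟪[X₀, X₁]ψ, [Y₀, Y₁]ψ⟫ ≤ 4 + 2‖[X₀, X₁]ψ‖`. The bias is at most `‖Cψ‖`, so a bias
of `2√2 - ε` forces `‖[X₀, X₁]ψ‖ ≥ 2 - 2√2 ε`. Finally `{X₀, X₁}² = 4 + [X₀, X₁]²` gives
`⟪ψ, {X₀, X₁}² ψ⟫ = 4 - ‖[X₀, X₁]ψ‖² ≤ 8√2 ε`.
-/

-- The inner product in the statement is Mathlib's `TensorProduct.instInner`, but the norm in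
-- `CHSHStrategy.psi_norm` comes from `tensorNormedAddCommGroup`. We work with Mathlib's structure
-- throughout and transport `psi_norm` by `tensorNorm_eq_norm`.
attribute [-instance] tensorNormedAddCommGroup tensorInnerProductSpace

section Ring

variable {R : Type*} [Ring R]

def chsh (X₀ X₁ Y₀ Y₁ : R) : R := X₀ * Y₀ + X₀ * Y₁ + X₁ * Y₀ - X₁ * Y₁

theorem chsh_sq {X₀ X₁ Y₀ Y₁ : R}
    (hX₀ : X₀ * X₀ = 1) (hX₁ : X₁ * X₁ = 1) (hY₀ : Y₀ * Y₀ = 1) (hY₁ : Y₁ * Y₁ = 1)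
    (h₀₀ : Commute X₀ Y₀) (h₀₁ : Commute X₀ Y₁) (h₁₀ : Commute X₁ Y₀) (h₁₁ : Commute X₁ Y₁) :
    chsh X₀ X₁ Y₀ Y₁ ^ 2 = 4 - ⁅X₀, X₁⁆ * ⁅Y₀, Y₁⁆ := by
  simp only [chsh, sq, add_mul, mul_add, sub_mul, mul_sub, h₀₀.symm.mul_mul_mul_comm,
    h₀₁.symm.mul_mul_mul_comm, h₁₀.symm.mul_mul_mul_comm, h₁₁.symm.mul_mul_mul_comm,
    hX₀, hX₁, hY₀, hY₁, one_mul, Ring.lie_def]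
  rw [show (4 : R) = 1 + 1 + 1 + 1 by norm_num]
  noncomm_ring

theorem anticomm_sq {X Y : R} (hX : X * X = 1) (hY : Y * Y = 1) :
    (X * Y + Y * X) ^ 2 = ⁅X, Y⁆ ^ 2 + 4 := by
  have hXY : X * Y * (Y * X) = 1 := by rw [mul_assoc, ← mul_assoc Y, hY, one_mul, hX]
  have hYX : Y * X * (X * Y) = 1 := by rw [mul_assoc, ← mul_assoc X, hX, one_mul, hY]
  simp only [sq, Ring.lie_def, add_mul, mul_add, sub_mul, mul_sub, hXY, hYX]
  rw [show (4 : R) = 1 + 1 + 1 + 1 by norm_num]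
  noncomm_ring

end Ring

theorem four_sub_sq_le {ε N n : ℝ} (hN : 2 * Real.sqrt 2 - ε ≤ N) (hN2 : N ^ 2 ≤ 4 + 2 * n) :
    4 - n ^ 2 ≤ 8 * Real.sqrt 2 * ε := by
  have hs : Real.sqrt 2 ^ 2 = 2 := Real.sq_sqrt zero_le_two
  have hs0 : 0 < Real.sqrt 2 := by positivity
  rcases le_or_gt 0 (2 * Real.sqrt 2 - ε) with ha | ha
  · have hn : 2 - 2 * Real.sqrt 2 * ε ≤ n := by nlinarith [pow_le_pow_left₀ ha hN 2, sq_nonneg ε]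
    rcases le_or_gt 0 (2 - 2 * Real.sqrt 2 * ε) with hb | hb
    · nlinarith [pow_le_pow_left₀ hb hn 2, sq_nonneg ε]
    · nlinarith
  · nlinarith

section InnerProductSpace

variable {V : Type*} [NormedAddCommGroup V] [InnerProductSpace ℂ V]

theorem re_inner_ofNat_apply (n : ℕ) [n.AtLeastTwo] (v : V) :
    (⟪v, (OfNat.ofNat n : Module.End ℂ V) v⟫).re = OfNat.ofNat n * ‖v‖ ^ 2 := by
  rw [Module.End.ofNat_apply, inner_smul_right_eq_smul, Complex.smul_re, ← RCLike.re_to_complex,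
    inner_self_eq_norm_sq, nsmul_eq_mul, Nat.cast_ofNat]

namespace IsBinaryObservable

variable {X Y : V →ₗ[ℂ] V}

protected theorem id : IsBinaryObservable (LinearMap.id : V →ₗ[ℂ] V) :=
  ⟨LinearMap.IsSymmetric.id, rfl⟩

theorem norm_apply (hX : IsBinaryObservable X) (v : V) : ‖X v‖ = ‖v‖ := by
  rw [@norm_eq_sqrt_re_inner ℂ, @norm_eq_sqrt_re_inner ℂ _ _ _ _ v, hX.symm,
    ← LinearMap.comp_apply, hX.sq_one, LinearMap.id_apply]

theorem inner_lie_right (hX : IsBinaryObservable X) (hY : IsBinaryObservable Y) (u v : V) :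
    ⟪u, ⁅X, Y⁆ v⟫ = -⟪⁅X, Y⁆ u, v⟫ := by
  simp only [Ring.lie_def, LinearMap.sub_apply, Module.End.mul_apply, inner_sub_left,
    inner_sub_right, hX.symm _, hY.symm _, neg_sub]

theorem norm_lie_apply_le (hX : IsBinaryObservable X) (hY : IsBinaryObservable Y) (v : V) :
    ‖⁅X, Y⁆ v‖ ≤ 2 * ‖v‖ := by
  calc ‖⁅X, Y⁆ v‖ = ‖X (Y v) - Y (X v)‖ := rfl
    _ ≤ ‖X (Y v)‖ + ‖Y (X v)‖ := norm_sub_le _ _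
    _ = 2 * ‖v‖ := by rw [hX.norm_apply, hY.norm_apply, hY.norm_apply, hX.norm_apply]; ring

theorem re_inner_anticomm_sq (hX : IsBinaryObservable X) (hY : IsBinaryObservable Y) (v : V) :
    (⟪v, ((X * Y + Y * X) ^ 2) v⟫).re = 4 * ‖v‖ ^ 2 - ‖⁅X, Y⁆ v‖ ^ 2 := by
  rw [anticomm_sq hX.sq_one hY.sq_one, LinearMap.add_apply, sq, Module.End.mul_apply,
    inner_add_right, Complex.add_re, re_inner_ofNat_apply, hX.inner_lie_right hY, Complex.neg_re,
    ← RCLike.re_to_complex, inner_self_eq_norm_sq]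
  ring

end IsBinaryObservable

end InnerProductSpace

structure IsCommutingCHSH {V : Type*} [NormedAddCommGroup V] [InnerProductSpace ℂ V]
    (X₀ X₁ Y₀ Y₁ : V →ₗ[ℂ] V) : Prop where
  X₀_bin : IsBinaryObservable X₀
  X₁_bin : IsBinaryObservable X₁
  Y₀_bin : IsBinaryObservable Y₀
  Y₁_bin : IsBinaryObservable Y₁
  commute₀₀ : Commute X₀ Y₀
  commute₀₁ : Commute X₀ Y₁
  commute₁₀ : Commute X₁ Y₀
  commute₁₁ : Commute X₁ Y₁

namespace IsCommutingCHSH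

variable {V : Type*} [NormedAddCommGroup V] [InnerProductSpace ℂ V] {X₀ X₁ Y₀ Y₁ : V →ₗ[ℂ] V}

theorem isSymmetric_chsh (h : IsCommutingCHSH X₀ X₁ Y₀ Y₁) :
    (chsh X₀ X₁ Y₀ Y₁).IsSymmetric :=
  (((h.X₀_bin.symm.mul_of_commute h.Y₀_bin.symm h.commute₀₀).add
    (h.X₀_bin.symm.mul_of_commute h.Y₁_bin.symm h.commute₀₁)).add
    (h.X₁_bin.symm.mul_of_commute h.Y₀_bin.symm h.commute₁₀)).sub
    (h.X₁_bin.symm.mul_of_commute h.Y₁_bin.symm h.commute₁₁)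

theorem norm_sq_chsh_apply_le (h : IsCommutingCHSH X₀ X₁ Y₀ Y₁) (v : V) :
    ‖chsh X₀ X₁ Y₀ Y₁ v‖ ^ 2 ≤ 4 * ‖v‖ ^ 2 + ‖⁅X₀, X₁⁆ v‖ * (2 * ‖v‖) := by
  have hsq := chsh_sq h.X₀_bin.sq_one h.X₁_bin.sq_one h.Y₀_bin.sq_one h.Y₁_bin.sq_one
    h.commute₀₀ h.commute₀₁ h.commute₁₀ h.commute₁₁
  calc ‖chsh X₀ X₁ Y₀ Y₁ v‖ ^ 2 = (⟪v, (chsh X₀ X₁ Y₀ Y₁ ^ 2) v⟫).re := by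
        rw [sq (chsh X₀ X₁ Y₀ Y₁), Module.End.mul_apply, ← h.isSymmetric_chsh, ← RCLike.re_to_complex,
          inner_self_eq_norm_sq]
    _ = 4 * ‖v‖ ^ 2 + (⟪⁅X₀, X₁⁆ v, ⁅Y₀, Y₁⁆ v⟫).re := by
        rw [hsq, LinearMap.sub_apply, Module.End.mul_apply, inner_sub_right, Complex.sub_re,
          re_inner_ofNat_apply, h.X₀_bin.inner_lie_right h.X₁_bin, Complex.neg_re, sub_neg_eq_add]
    _ ≤ 4 * ‖v‖ ^ 2 + ‖⁅X₀, X₁⁆ v‖ * (2 * ‖v‖) := by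
        gcongr
        exact (re_inner_le_norm (𝕜 := ℂ) _ _).trans
          (mul_le_mul_of_nonneg_left (h.Y₀_bin.norm_lie_apply_le h.Y₁_bin v) (norm_nonneg _))

theorem re_inner_anticomm_sq_le (h : IsCommutingCHSH X₀ X₁ Y₀ Y₁) {v : V} (hv : ‖v‖ = 1)
    {ε : ℝ} (hbias : 2 * Real.sqrt 2 - ε ≤ (⟪v, chsh X₀ X₁ Y₀ Y₁ v⟫).re) :
    (⟪v, ((X₀ * X₁ + X₁ * X₀) ^ 2) v⟫).re ≤ 8 * Real.sqrt 2 * ε := by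
  have hnorm : 2 * Real.sqrt 2 - ε ≤ ‖chsh X₀ X₁ Y₀ Y₁ v‖ := by
    simpa [hv] using hbias.trans (re_inner_le_norm (𝕜 := ℂ) v _)
  have hsq := h.norm_sq_chsh_apply_le v
  rw [hv] at hsq
  rw [h.X₀_bin.re_inner_anticomm_sq h.X₁_bin, hv]
  linarith [four_sub_sq_le hnorm (by linarith : _ ≤ 4 + 2 * ‖⁅X₀, X₁⁆ v‖)]

end IsCommutingCHSH

section TensorProduct

variable {E F : Type*} [NormedAddCommGroup E] [InnerProductSpace ℂ E]
  [NormedAddCommGroup F] [InnerProductSpace ℂ F]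

theorem applyAlice_mul_applyBob (A : E →ₗ[ℂ] E) (B : F →ₗ[ℂ] F) :
    applyAlice A * applyBob B = TensorProduct.map A B :=
  LinearMap.rTensor_comp_lTensor E A B

theorem applyBob_mul_applyAlice (A : E →ₗ[ℂ] E) (B : F →ₗ[ℂ] F) :
    applyBob B * applyAlice A = TensorProduct.map A B :=
  LinearMap.lTensor_comp_rTensor E A B

theorem commute_applyAlice_applyBob (A : E →ₗ[ℂ] E) (B : F →ₗ[ℂ] F) :
    Commute (applyAlice A) (applyBob B) :=
  (applyAlice_mul_applyBob A B).trans (applyBob_mul_applyAlice A B).symm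

theorem CHSH_op_eq_chsh (A₀ A₁ : E →ₗ[ℂ] E) (B₀ B₁ : F →ₗ[ℂ] F) :
    CHSH_op A₀ A₁ B₀ B₁ =
      chsh (applyAlice A₀) (applyAlice A₁) (applyBob B₀) (applyBob (H_A := E) B₁) := by
  simp only [CHSH_op, chsh, applyAlice_mul_applyBob]

theorem applyAlice_anticomm_sq (A₀ A₁ : E →ₗ[ℂ] E) :
    TensorProduct.map ((A₀ ∘ₗ A₁ + A₁ ∘ₗ A₀) ∘ₗ (A₀ ∘ₗ A₁ + A₁ ∘ₗ A₀)) (LinearMap.id : F →ₗ[ℂ] F) =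
      (applyAlice A₀ * applyAlice A₁ + applyAlice A₁ * applyAlice A₀) ^ 2 := by
  change LinearMap.rTensor F ((A₀ * A₁ + A₁ * A₀) * (A₀ * A₁ + A₁ * A₀)) = _
  simp only [LinearMap.rTensor_mul, LinearMap.rTensor_add, sq]
  rfl

variable [FiniteDimensional ℂ E] [FiniteDimensional ℂ F]

theorem tensorRepr_eq_repr (x : E ⊗[ℂ] F) :
    tensorRepr E F x =
      ((stdOrthonormalBasis ℂ E).tensorProduct (stdOrthonormalBasis ℂ F)).repr x := by
  ext i
  simp [tensorRepr, ← OrthonormalBasis.coe_toBasis_repr_apply]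

theorem tensorNorm_eq_norm (x : E ⊗[ℂ] F) :
    @Norm.norm _ (tensorNormedAddCommGroup E F).toNorm x = ‖x‖ := by
  rw [@norm_eq_sqrt_re_inner ℂ _ _ _ _ x]
  change √(RCLike.re ⟪tensorRepr E F x, tensorRepr E F x⟫) = _
  rw [tensorRepr_eq_repr, LinearIsometryEquiv.inner_map_map]

theorem IsBinaryObservable.tensorMap {A : E →ₗ[ℂ] E} {B : F →ₗ[ℂ] F}
    (hA : IsBinaryObservable A) (hB : IsBinaryObservable B) :
    IsBinaryObservable (TensorProduct.map A B) where
  symm := by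
    rw [LinearMap.isSymmetric_iff_isSelfAdjoint, LinearMap.isSelfAdjoint_iff',
      TensorProduct.adjoint_map, hA.symm.adjoint_eq, hB.symm.adjoint_eq]
  sq_one := by rw [← TensorProduct.map_comp, hA.sq_one, hB.sq_one, TensorProduct.map_id]

theorem isCommutingCHSH_applyAlice_applyBob {A₀ A₁ : E →ₗ[ℂ] E} {B₀ B₁ : F →ₗ[ℂ] F}
    (hA₀ : IsBinaryObservable A₀) (hA₁ : IsBinaryObservable A₁)
    (hB₀ : IsBinaryObservable B₀) (hB₁ : IsBinaryObservable B₁) :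
    IsCommutingCHSH (applyAlice A₀) (applyAlice A₁) (applyBob B₀) (applyBob (H_A := E) B₁) where
  X₀_bin := hA₀.tensorMap .id
  X₁_bin := hA₁.tensorMap .id
  Y₀_bin := IsBinaryObservable.id.tensorMap hB₀
  Y₁_bin := IsBinaryObservable.id.tensorMap hB₁
  commute₀₀ := commute_applyAlice_applyBob A₀ B₀
  commute₀₁ := commute_applyAlice_applyBob A₀ B₁
  commute₁₀ := commute_applyAlice_applyBob A₁ B₀
  commute₁₁ := commute_applyAlice_applyBob A₁ B₁

end TensorProduct

/-- **Alice anticommutator bound.** -/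
theorem alice_anticommutator_bound
    {H_A H_B : Type*}
    [NormedAddCommGroup H_A] [InnerProductSpace ℂ H_A] [FiniteDimensional ℂ H_A]
    [NormedAddCommGroup H_B] [InnerProductSpace ℂ H_B] [FiniteDimensional ℂ H_B]
    (S : CHSHStrategy H_A H_B) (ε : ℝ) (hε : 0 ≤ ε)
    (hBias : chshBias S ≥ 2 * Real.sqrt 2 - ε) :
    (⟪S.psi, (TensorProduct.map
        ((S.A0 ∘ₗ S.A1 + S.A1 ∘ₗ S.A0) ∘ₗ (S.A0 ∘ₗ S.A1 + S.A1 ∘ₗ S.A0))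
        (LinearMap.id : H_B →ₗ[ℂ] H_B)) S.psi⟫).re ≤ cConst * ε := by
  have hS := isCommutingCHSH_applyAlice_applyBob S.A0_bin S.A1_bin S.B0_bin S.B1_bin
  have hψ : ‖S.psi‖ = 1 := (tensorNorm_eq_norm S.psi).symm.trans S.psi_norm
  rw [applyAlice_anticomm_sq]
  calc _ ≤ 8 * Real.sqrt 2 * ε := hS.re_inner_anticomm_sq_le hψ (by rwa [← CHSH_op_eq_chsh])
    _ ≤ cConst * ε := by unfold cConst; gcongr; norm_num
end

section
/- Exact intertwining for B0: Let H_B be a finite-dimensional complex inner product space and let B0, B1 be binary observables on H_B. With R := sin(π/8)·X + cos(π/8)·Z, U_B := (R ⊗ I) ∘ control(B1) ∘ (Had ⊗ I) ∘ control(B0) ∘ (Had ⊗ I) ∘ (R† ⊗ I) on ℂ² ⊗ H_B, |aux⟩ := R|0⟩, and V_B(v) := U_B(|aux⟩ ⊗ v), one has the exact operator identity (H ⊗ I) ∘ V_B = V_B ∘ B0, where H := (Z+X)/√2. -/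
set_option maxHeartbeats 1000000
set_option synthInstance.maxHeartbeats 400000
set_option synthInstance.maxSize 2048

open scoped TensorProduct
open Module

/-!
Bob's extractor is Alice's extractor `V_A = U_A(|0⟩ ⊗ ·)` followed by `R ⊗ I`, because `R` is a
self-adjoint involution and so `R†R|0⟩ = |0⟩`. Alice's extractor intertwines `B0` with `Z` exactly:
`U_A(|0⟩ ⊗ v) = |0⟩ ⊗ (v + B0 v)/2 + |1⟩ ⊗ B1(v - B0 v)/2`, and replacing `v` by `B0 v` only flips
the sign of the second summand when `B0² = I`. Finally `HR = RZ`: `R` is the reflection across the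
line at angle `π/16`, so it conjugates the reflection `Z` across the first axis into the reflection
`H` across the line at angle `π/8`.
-/

open Real

lemma ketbra_apply {E : Type*} [NormedAddCommGroup E] [InnerProductSpace ℂ E] (a b v : E) :
    ketbra a b v = ⟪b, v⟫ • a :=
  rfl

lemma ketbra_adjoint {E : Type*} [NormedAddCommGroup E] [InnerProductSpace ℂ E]
    [FiniteDimensional ℂ E] (a b : E) :
    LinearMap.adjoint (ketbra a b) = ketbra b a := by
  refine ((LinearMap.eq_adjoint_iff _ _).mpr fun x y => ?_).symm
  simp only [ketbra_apply, inner_smul_left, inner_smul_right, inner_conj_symm]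
  ring

lemma Qubit.linearMap_ext {M : Type*} [AddCommGroup M] [Module ℂ M]
    {f g : Qubit →ₗ[ℂ] M} (h0 : f ket0 = g ket0) (h1 : f ket1 = g ket1) : f = g := by
  refine (EuclideanSpace.basisFun (Fin 2) ℂ).toBasis.ext fun i => ?_
  fin_cases i
  · simpa [EuclideanSpace.basisFun_apply, ket0] using h0
  · simpa [EuclideanSpace.basisFun_apply, ket1] using h1

lemma ketbra_ket0_apply_ket0 (a : Qubit) : ketbra a ket0 ket0 = a := by
  simp [ketbra_apply, ket0]

lemma ketbra_ket1_apply_ket1 (a : Qubit) : ketbra a ket1 ket1 = a := by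
  simp [ketbra_apply, ket1]

lemma ketbra_ket0_apply_ket1 (a : Qubit) : ketbra a ket0 ket1 = 0 := by
  simp [ketbra_apply, ket0, ket1, EuclideanSpace.inner_single_left]

lemma ketbra_ket1_apply_ket0 (a : Qubit) : ketbra a ket1 ket0 = 0 := by
  simp [ketbra_apply, ket0, ket1, EuclideanSpace.inner_single_left]

lemma proj0_ket0 : proj0 ket0 = ket0 := ketbra_ket0_apply_ket0 ket0

lemma proj0_ket1 : proj0 ket1 = 0 := ketbra_ket0_apply_ket1 ket0

lemma proj1_ket0 : proj1 ket0 = 0 := ketbra_ket1_apply_ket0 ket1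

lemma proj1_ket1 : proj1 ket1 = ket1 := ketbra_ket1_apply_ket1 ket1

lemma pauliZ_ket0 : pauliZ ket0 = ket0 := by
  simp [pauliZ, ketbra_ket0_apply_ket0, ketbra_ket1_apply_ket0]

lemma pauliZ_ket1 : pauliZ ket1 = -ket1 := by
  simp [pauliZ, ketbra_ket1_apply_ket1, ketbra_ket0_apply_ket1]

lemma pauliX_ket0 : pauliX ket0 = ket1 := by
  simp [pauliX, ketbra_ket0_apply_ket0, ketbra_ket1_apply_ket0]

lemma pauliX_ket1 : pauliX ket1 = ket0 := by
  simp [pauliX, ketbra_ket1_apply_ket1, ketbra_ket0_apply_ket1]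

lemma pauliZ_adjoint : LinearMap.adjoint pauliZ = pauliZ := by
  rw [pauliZ, map_sub, ketbra_adjoint, ketbra_adjoint]

lemma pauliX_adjoint : LinearMap.adjoint pauliX = pauliX := by
  rw [pauliX, map_add, ketbra_adjoint, ketbra_adjoint, add_comm]

lemma hadamard_ket0 : Hadamard ket0 = (√2 : ℂ)⁻¹ • (ket0 + ket1) := by
  simp only [Hadamard, LinearMap.smul_apply, LinearMap.add_apply, pauliZ_ket0, pauliX_ket0]

lemma hadamard_ket1 : Hadamard ket1 = (√2 : ℂ)⁻¹ • (ket0 - ket1) := by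
  simp only [Hadamard, LinearMap.smul_apply, LinearMap.add_apply, pauliZ_ket1, pauliX_ket1,
    neg_add_eq_sub]

lemma comp_self_of_reflection {R : Qubit →ₗ[ℂ] Qubit} {c s : ℂ} (hcs : c ^ 2 + s ^ 2 = 1)
    (h0 : R ket0 = c • ket0 + s • ket1) (h1 : R ket1 = s • ket0 - c • ket1) :
    R ∘ₗ R = LinearMap.id := by
  apply Qubit.linearMap_ext <;>
  · simp only [LinearMap.comp_apply, LinearMap.id_apply, h0, h1, map_add, map_sub, map_smul,
      smul_add, smul_sub, smul_smul]
    match_scalars <;> first | ring1 | linear_combination hcs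

lemma hadamard_comp_of_reflection {R : Qubit →ₗ[ℂ] Qubit} {c s : ℂ}
    (hadd : (√2 : ℂ)⁻¹ * (c + s) = c) (hsub : (√2 : ℂ)⁻¹ * (c - s) = s)
    (h0 : R ket0 = c • ket0 + s • ket1) (h1 : R ket1 = s • ket0 - c • ket1) :
    Hadamard ∘ₗ R = R ∘ₗ pauliZ := by
  apply Qubit.linearMap_ext
  · calc Hadamard (R ket0)
        = ((√2 : ℂ)⁻¹ * (c + s)) • ket0 + ((√2 : ℂ)⁻¹ * (c - s)) • ket1 := by
          simp only [h0, map_add, map_smul, hadamard_ket0, hadamard_ket1]; module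
      _ = R (pauliZ ket0) := by rw [hadd, hsub, pauliZ_ket0, h0]
  · calc Hadamard (R ket1)
        = -((√2 : ℂ)⁻¹ * (c - s)) • ket0 + ((√2 : ℂ)⁻¹ * (c + s)) • ket1 := by
          simp only [h1, map_sub, map_smul, hadamard_ket0, hadamard_ket1]; module
      _ = R (pauliZ ket1) := by rw [hadd, hsub, pauliZ_ket1, map_neg, h1]; module

lemma inv_sqrt_two_mul_cos_pi_div_eight_add_sin :
    (√2)⁻¹ * (cos (π / 8) + sin (π / 8)) = cos (π / 8) := by
  rw [inv_mul_eq_iff_eq_mul₀ (by positivity)]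
  have h : sin (π / 4 + π / 8) = cos (π / 8) := by
    rw [show π / 4 + π / 8 = π / 2 - π / 8 by ring, sin_pi_div_two_sub]
  rw [sin_add, sin_pi_div_four, cos_pi_div_four] at h
  linear_combination √2 * h - (cos (π / 8) + sin (π / 8)) / 2 * mul_self_sqrt zero_le_two

lemma inv_sqrt_two_mul_cos_pi_div_eight_sub_sin :
    (√2)⁻¹ * (cos (π / 8) - sin (π / 8)) = sin (π / 8) := by
  rw [inv_mul_eq_iff_eq_mul₀ (by positivity)]
  have h : cos (π / 4 + π / 8) = sin (π / 8) := by
    rw [show π / 4 + π / 8 = π / 2 - π / 8 by ring, cos_pi_div_two_sub]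
  rw [cos_add, sin_pi_div_four, cos_pi_div_four] at h
  linear_combination √2 * h - (cos (π / 8) - sin (π / 8)) / 2 * mul_self_sqrt zero_le_two

lemma rotation_ket0 : Rotation ket0 =
    ((cos (π / 8) : ℝ) : ℂ) • ket0 + ((sin (π / 8) : ℝ) : ℂ) • ket1 := by
  simp only [Rotation, LinearMap.add_apply, LinearMap.smul_apply, pauliZ_ket0, pauliX_ket0]
  abel

lemma rotation_ket1 : Rotation ket1 =
    ((sin (π / 8) : ℝ) : ℂ) • ket0 - ((cos (π / 8) : ℝ) : ℂ) • ket1 := by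
  simp only [Rotation, LinearMap.add_apply, LinearMap.smul_apply, pauliZ_ket1, pauliX_ket1,
    smul_neg]
  abel

lemma rotation_adjoint : LinearMap.adjoint Rotation = Rotation := by
  simp only [Rotation, map_add, map_smulₛₗ, Complex.conj_ofReal, pauliX_adjoint, pauliZ_adjoint]

lemma rotation_comp_rotation : Rotation ∘ₗ Rotation = LinearMap.id :=
  comp_self_of_reflection (by exact_mod_cast cos_sq_add_sin_sq (π / 8)) rotation_ket0
    rotation_ket1

lemma hadamard_comp_rotation : Hadamard ∘ₗ Rotation = Rotation ∘ₗ pauliZ :=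
  hadamard_comp_of_reflection (by exact_mod_cast inv_sqrt_two_mul_cos_pi_div_eight_add_sin)
    (by exact_mod_cast inv_sqrt_two_mul_cos_pi_div_eight_sub_sin) rotation_ket0 rotation_ket1

section Circuit

variable {H : Type*} [NormedAddCommGroup H] [InnerProductSpace ℂ H]

lemma controlGate_ket0_tmul (A : H →ₗ[ℂ] H) (v : H) :
    controlGate A (ket0 ⊗ₜ[ℂ] v) = ket0 ⊗ₜ[ℂ] v := by
  simp [controlGate, proj0_ket0, proj1_ket0]

lemma controlGate_ket1_tmul (A : H →ₗ[ℂ] H) (v : H) :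
    controlGate A (ket1 ⊗ₜ[ℂ] v) = ket1 ⊗ₜ[ℂ] A v := by
  simp [controlGate, proj0_ket1, proj1_ket1]

lemma unitaryUA_ket0_tmul (A0 A1 : H →ₗ[ℂ] H) (v : H) :
    unitaryUA A0 A1 (ket0 ⊗ₜ[ℂ] v)
      = (2 : ℂ)⁻¹ • (ket0 ⊗ₜ[ℂ] (v + A0 v) + ket1 ⊗ₜ[ℂ] (A1 v - A1 (A0 v))) := by
  have h2 : (√2 : ℂ)⁻¹ * (√2 : ℂ)⁻¹ = (2 : ℂ)⁻¹ := by
    rw [← mul_inv, ← Complex.ofReal_mul, mul_self_sqrt zero_le_two, Complex.ofReal_ofNat]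
  simp only [unitaryUA, LinearMap.comp_apply, TensorProduct.map_tmul, LinearMap.id_apply,
    hadamard_ket0, hadamard_ket1, ← TensorProduct.smul_tmul', TensorProduct.add_tmul,
    TensorProduct.sub_tmul, map_add, map_sub, map_smul, controlGate_ket0_tmul,
    controlGate_ket1_tmul, TensorProduct.tmul_add, TensorProduct.tmul_sub, smul_add, smul_sub,
    smul_smul, h2]
  module

lemma map_pauliZ_comp_VA {A0 : H →ₗ[ℂ] H} (hA0 : A0 ∘ₗ A0 = LinearMap.id) (A1 : H →ₗ[ℂ] H) :
    TensorProduct.map pauliZ LinearMap.id ∘ₗ VA A0 A1 = VA A0 A1 ∘ₗ A0 := by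
  ext v
  have hA0v : A0 (A0 v) = v := LinearMap.congr_fun hA0 v
  simp only [VA, embed, LinearMap.comp_apply, TensorProduct.mk_apply, unitaryUA_ket0_tmul, hA0v,
    map_smul, map_add, map_sub, TensorProduct.map_tmul, pauliZ_ket0, pauliZ_ket1,
    LinearMap.id_apply, TensorProduct.neg_tmul, TensorProduct.tmul_add, TensorProduct.tmul_sub]
  module

lemma VB_eq_map_rotation_comp_VA (B0 B1 : H →ₗ[ℂ] H) :
    VB B0 B1 = TensorProduct.map Rotation LinearMap.id ∘ₗ VA B0 B1 := by
  have hR : LinearMap.adjoint Rotation (Rotation ket0) = ket0 := by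
    rw [rotation_adjoint, ← LinearMap.comp_apply, rotation_comp_rotation, LinearMap.id_apply]
  ext v
  simp only [VB, VA, unitaryUB, embed, auxState, LinearMap.comp_apply, TensorProduct.mk_apply,
    TensorProduct.map_tmul, LinearMap.id_apply, hR]

end Circuit

theorem B0_exact_intertwine_general
    {H_B : Type*} [NormedAddCommGroup H_B] [InnerProductSpace ℂ H_B]
    (B0 B1 : H_B →ₗ[ℂ] H_B)
    (hB0 : IsBinaryObservable B0) :
    (TensorProduct.map Hadamard (LinearMap.id : H_B →ₗ[ℂ] H_B)) ∘ₗ VB B0 B1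
      = VB B0 B1 ∘ₗ B0 := by
  have hHR : TensorProduct.map Hadamard (LinearMap.id : H_B →ₗ[ℂ] H_B) ∘ₗ
      TensorProduct.map Rotation LinearMap.id
        = TensorProduct.map Rotation LinearMap.id ∘ₗ TensorProduct.map pauliZ LinearMap.id := by
    rw [← TensorProduct.map_comp, ← TensorProduct.map_comp, hadamard_comp_rotation]
  rw [VB_eq_map_rotation_comp_VA, ← LinearMap.comp_assoc, hHR, LinearMap.comp_assoc,
    map_pauliZ_comp_VA hB0.sq_one, LinearMap.comp_assoc]

/-- **Exact intertwining for `B0`:** `(H ⊗ I) ∘ V_B = V_B ∘ B0`. -/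
theorem B0_exact_intertwine
    {H_B : Type*} [NormedAddCommGroup H_B] [InnerProductSpace ℂ H_B]
    [FiniteDimensional ℂ H_B]
    (B0 B1 : H_B →ₗ[ℂ] H_B)
    (hB0 : IsBinaryObservable B0) (hB1 : IsBinaryObservable B1) :
    (TensorProduct.map Hadamard (LinearMap.id : H_B →ₗ[ℂ] H_B)) ∘ₗ VB B0 B1
      = VB B0 B1 ∘ₗ B0 :=
  B0_exact_intertwine_general B0 B1 hB0
end
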